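/- arXiv:2312.10413 — 2 statements merged into one kernel-verified Lean document; each statement's English description precedes it below -/
import Mathlib

section
/- Let G be a split graph on 4k+1 vertices. If G is self-complementary, then G has exactly one vertex v of degree 2k, and the induced subgraph G - v is also self-complementary. -/
open SimpleGraph

/-- The degree of a vertex, as the cardinality of its neighbor set. -/
noncomputable def deg {V : Type*} (G : SimpleGraph V) (v : V) : ℕ := (G.neighborSet v).ncard

/-- The degree sequence of a finite graph, as a multiset (which determines the
non-increasing sequence of vertex degrees). -/
noncomputable def degMultiset {V : Type*} [Finite V] (G : SimpleGraph V) : Multiset ℕ :=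
  letI := Fintype.ofFinite V
  Finset.univ.val.map fun v => deg G v

/-- A graph is self-complementary if it is isomorphic to its complement. -/
def IsSelfCompl {V : Type*} (G : SimpleGraph V) : Prop := Nonempty (G ≃g Gᶜ)

/-- A degree sequence is forcibly self-complementary if every realization of it
is self-complementary. -/
def ForciblySC (τ : Multiset ℕ) : Prop :=
  ∀ G : SimpleGraph (Fin (Multiset.card τ)), degMultiset G = τ → IsSelfCompl G

/-- A split partition: a partition of the vertex set into a clique `K` and an
independent set `I`. -/
def IsSplitPartition {V : Type*} (G : SimpleGraph V) (K I : Set V) : Prop :=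
  Disjoint K I ∧ K ∪ I = Set.univ ∧ G.IsClique K ∧ ∀ u ∈ I, ∀ v ∈ I, ¬ G.Adj u v

/-- A split graph: a graph admitting a split partition. -/
def IsSplit {V : Type*} (G : SimpleGraph V) : Prop := ∃ K I, IsSplitPartition G K I

/-!
An isomorphism `σ : G ≃g Gᶜ` turns cliques into independent sets, so the two sides of a split
partition `K ⊔ I` have sizes `2k` and `2k + 1`; since passing to `Gᶜ` swaps the sides and keeps
the vertices of degree `2k`, we may take `|K| = 2k + 1`. Let `A` be the set of vertices of degree
`2k`. Every vertex of `K \ A` has degree `> 2k` and every vertex of `I \ A` degree `< 2k`, and as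
`deg (σ v) = 4k - deg v`, the map `σ` matches these two sets, so `|K \ A| = |I \ A|`. A vertex of
`I ∩ A` could only be adjacent to vertices of `K \ A` (a vertex of `K ∩ A` has no neighbour
outside `K`), and there are fewer than `2k` of those; hence `A ⊆ K` and
`|A| = |K| - |I| = 1`. Finally `σ` fixes the unique vertex `v` of degree `2k`, so it restricts to
an isomorphism `G - v ≃g (G - v)ᶜ`.
-/

namespace SimpleGraph

variable {V : Type*}

lemma induce_compl (G : SimpleGraph V) (s : Set V) : Gᶜ.induce s = (G.induce s)ᶜ := by
  ext u w
  simp [compl_adj, Subtype.ext_iff]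

end SimpleGraph

section Degree

variable {V W : Type*} {G : SimpleGraph V}

lemma deg_iso_apply {H : SimpleGraph W} (e : G ≃g H) (v : V) : deg H (e v) = deg G v := by
  rw [deg, deg, ← Nat.card_coe_set_eq, ← Nat.card_coe_set_eq]
  exact Nat.card_congr (e.mapNeighborSet v).symm

lemma deg_compl_add_deg [Finite V] (G : SimpleGraph V) (v : V) :
    deg Gᶜ v + deg G v = Nat.card V - 1 := by
  have := Fintype.ofFinite V
  classical
  have hdeg : ∀ H : SimpleGraph V, deg H v = H.degree v := fun H => by
    rw [deg, Set.ncard_eq_toFinset_card']; rfl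
  rw [hdeg, hdeg, degree_compl, Nat.card_eq_fintype_card]
  have := G.degree_lt_card_verts v
  omega

lemma deg_apply_add_deg [Finite V] (σ : G ≃g Gᶜ) (v : V) :
    deg G (σ v) + deg G v = Nat.card V - 1 := by
  rw [← deg_compl_add_deg G (σ v), deg_iso_apply σ, add_comm]

lemma ncard_setOf_deg_lt_eq_ncard_setOf_lt_deg [Finite V] (σ : G ≃g Gᶜ) {m : ℕ}
    (hm : Nat.card V = 2 * m + 1) :
    {v | deg G v < m}.ncard = {v | m < deg G v}.ncard := by
  have hpre : {v | m < deg G v} = σ ⁻¹' {v | deg G v < m} := by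
    ext v
    have := deg_apply_add_deg σ v
    simp only [Set.mem_ofPred_eq, Set.mem_preimage]
    omega
  rw [hpre, Set.ncard_preimage_of_injective_subset_range σ.injective (by simp)]

end Degree

namespace IsSelfCompl

variable {V : Type*} {G : SimpleGraph V}

lemma compl (hG : IsSelfCompl G) : IsSelfCompl Gᶜ := by
  obtain ⟨σ⟩ := hG
  rw [IsSelfCompl, compl_compl]
  exact ⟨σ.symm⟩

lemma induce_of_bijOn (σ : G ≃g Gᶜ) {s : Set V} (hs : Set.BijOn σ s s) :
    IsSelfCompl (G.induce s) := by
  rw [IsSelfCompl, ← induce_compl]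
  exact ⟨σ.induce hs⟩

end IsSelfCompl

namespace IsSplitPartition

variable {V : Type*} {G : SimpleGraph V} {K I : Set V}

lemma compl (hp : IsSplitPartition G K I) : IsSplitPartition Gᶜ I K := by
  obtain ⟨hdisj, hcover, hK, hI⟩ := hp
  refine ⟨hdisj.symm, by rw [Set.union_comm, hcover], fun u hu w hw hne => ⟨hne, hI u hu w hw⟩,
    fun u hu w hw hadj => hadj.2 (hK hu hw hadj.1)⟩

lemma mem_right_of_notMem_left (hp : IsSplitPartition G K I) {v : V} (hv : v ∉ K) : v ∈ I := by
  have : v ∈ K ∪ I := hp.2.1 ▸ Set.mem_univ v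
  exact this.resolve_left hv

lemma neighborSet_subset_left (hp : IsSplitPartition G K I) {u : V} (hu : u ∈ I) :
    G.neighborSet u ⊆ K := fun w hw =>
  by_contra fun hwK => hp.2.2.2 u hu w (hp.mem_right_of_notMem_left hwK) hw

lemma sdiff_singleton_subset_neighborSet (hp : IsSplitPartition G K I) {v : V} (hv : v ∈ K) :
    K \ {v} ⊆ G.neighborSet v := fun _ hw => hp.2.2.1 hv hw.1 (Ne.symm hw.2)

variable [Finite V]

lemma ncard_add_ncard (hp : IsSplitPartition G K I) : K.ncard + I.ncard = Nat.card V := by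
  rw [← Set.ncard_union_eq hp.1, hp.2.1, Set.ncard_univ]

lemma ncard_left_le_deg_add_one (hp : IsSplitPartition G K I) {v : V} (hv : v ∈ K) :
    K.ncard ≤ deg G v + 1 := by
  have := Set.ncard_le_ncard (hp.sdiff_singleton_subset_neighborSet hv)
  rw [Set.ncard_sdiff_singleton_of_mem hv] at this
  rw [deg]
  omega

lemma ncard_left_le_deg_of_adj (hp : IsSplitPartition G K I) {v u : V} (hv : v ∈ K) (hu : u ∈ I)
    (hadj : G.Adj v u) : K.ncard ≤ deg G v := by
  have huK : u ∉ K \ {v} := fun h => Set.disjoint_left.mp hp.1 h.1 hu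
  have hsub : insert u (K \ {v}) ⊆ G.neighborSet v :=
    Set.insert_subset hadj (hp.sdiff_singleton_subset_neighborSet hv)
  have := Set.ncard_le_ncard hsub
  rw [Set.ncard_insert_of_notMem huK, Set.ncard_sdiff_singleton_of_mem hv] at this
  have := (Set.ncard_pos).mpr ⟨v, hv⟩
  rw [deg]
  omega

/-- An independent set meets the clique side of a split partition in at most one vertex. -/
lemma ncard_le_of_isIndepSet (hp : IsSplitPartition G K I) {S : Set V} (hS : G.IsIndepSet S) :
    S.ncard ≤ I.ncard + 1 := by
  have hSK : (S ∩ K).ncard ≤ 1 := by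
    rw [Set.ncard_le_one]
    intro a ha b hb
    by_contra hne
    exact hS ha.1 hb.1 hne (hp.2.2.1 ha.2 hb.2 hne)
  have hsub : S ⊆ (S ∩ K) ∪ I := fun v hv =>
    (em (v ∈ K)).imp (fun hvK => ⟨hv, hvK⟩) hp.mem_right_of_notMem_left
  calc S.ncard ≤ ((S ∩ K) ∪ I).ncard := Set.ncard_le_ncard hsub
    _ ≤ (S ∩ K).ncard + I.ncard := Set.ncard_union_le _ _
    _ ≤ I.ncard + 1 := by omega

lemma ncard_le_of_isClique (hp : IsSplitPartition G K I) (hG : IsSelfCompl G) {S : Set V}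
    (hS : G.IsClique S) : S.ncard ≤ I.ncard + 1 := by
  obtain ⟨σ⟩ := hG
  have hσS : Gᶜ.IsClique (σ '' S) := by
    rintro _ ⟨a, ha, rfl⟩ _ ⟨b, hb, rfl⟩ hne
    exact σ.map_adj_iff.mpr (hS ha hb (ne_of_apply_ne σ hne))
  rw [isClique_compl] at hσS
  simpa [Set.ncard_image_of_injective _ σ.injective] using hp.ncard_le_of_isIndepSet hσS

lemma ncard_left_le_ncard_right_add_one (hp : IsSplitPartition G K I) (hG : IsSelfCompl G) :
    K.ncard ≤ I.ncard + 1 :=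
  hp.ncard_le_of_isClique hG hp.2.2.1


/-- Otherwise `u` would extend `K` to a clique of size `|K| + 1`, which `G ≅ Gᶜ` turns into an
independent set too large for the split partition. -/
lemma deg_lt_ncard_left (hp : IsSplitPartition G K I) (hG : IsSelfCompl G)
    (hIK : I.ncard < K.ncard) {u : V} (hu : u ∈ I) : deg G u < K.ncard := by
  by_contra! hle
  have hN : G.neighborSet u = K :=
    Set.eq_of_subset_of_ncard_le (hp.neighborSet_subset_left hu) hle
  have huK : u ∉ K := fun h => Set.disjoint_left.mp hp.1 h hu
  have hclique : G.IsClique (insert u K) :=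
    hp.2.2.1.insert fun w hw _ => show w ∈ G.neighborSet u from hN ▸ hw
  have := hp.ncard_le_of_isClique hG hclique
  rw [Set.ncard_insert_of_notMem huK] at this
  omega

lemma sdiff_setOf_deg_eq_left (hp : IsSplitPartition G K I) (hG : IsSelfCompl G) {m : ℕ}
    (hK : K.ncard = m + 1) (hI : I.ncard ≤ m) :
    K \ {v | deg G v = m} = {v | m < deg G v} := by
  ext v
  simp only [Set.mem_sdiff, Set.mem_ofPred_eq]
  constructor
  · rintro ⟨hvK, hv⟩
    have := hp.ncard_left_le_deg_add_one hvK
    omega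
  · intro hv
    refine ⟨by_contra fun hvK => ?_, by omega⟩
    have := hp.deg_lt_ncard_left hG (by omega) (hp.mem_right_of_notMem_left hvK)
    omega

lemma sdiff_setOf_deg_eq_right (hp : IsSplitPartition G K I) (hG : IsSelfCompl G) {m : ℕ}
    (hK : K.ncard = m + 1) (hI : I.ncard ≤ m) :
    I \ {v | deg G v = m} = {v | deg G v < m} := by
  ext v
  simp only [Set.mem_sdiff, Set.mem_ofPred_eq]
  constructor
  · rintro ⟨hvI, hv⟩
    have := hp.deg_lt_ncard_left hG (by omega) hvI
    omega
  · intro hv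
    refine ⟨hp.mem_right_of_notMem_left fun hvK => ?_, by omega⟩
    have := hp.ncard_left_le_deg_add_one hvK
    omega

lemma existsUnique_deg_eq (hp : IsSplitPartition G K I) (hG : IsSelfCompl G) {k : ℕ}
    (hn : Nat.card V = 4 * k + 1) (hK : K.ncard = 2 * k + 1) : ∃! v, deg G v = 2 * k := by
  have ⟨σ⟩ := hG
  have hI : I.ncard = 2 * k := by
    have := hp.ncard_add_ncard
    omega
  set A := {v | deg G v = 2 * k} with hA
  have hcount : (K \ A).ncard = (I \ A).ncard := by
    rw [hp.sdiff_setOf_deg_eq_left hG hK hI.le, hp.sdiff_setOf_deg_eq_right hG hK hI.le]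
    exact (ncard_setOf_deg_lt_eq_ncard_setOf_lt_deg σ (by omega)).symm
  have hAK : A ⊆ K := by
    intro u hu
    by_contra huK
    have huI := hp.mem_right_of_notMem_left huK
    have hN : G.neighborSet u ⊆ K \ A := fun w hw => by
      have hwK := hp.neighborSet_subset_left huI hw
      have := hp.ncard_left_le_deg_of_adj hwK huI hw.symm
      exact ⟨hwK, fun hwA => by rw [hA, Set.mem_ofPred_eq] at hwA; omega⟩
    have h1 : deg G u ≤ (K \ A).ncard := Set.ncard_le_ncard hN
    have h2 : (I \ A).ncard < I.ncard :=
      Set.ncard_lt_ncard ⟨Set.sdiff_subset, fun h => (h huI).2 hu⟩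
    rw [hA, Set.mem_ofPred_eq] at hu
    omega
  have hA1 : A.ncard = 1 := by
    have := Set.ncard_sdiff_add_ncard_of_subset hAK
    rw [hcount, (hp.1.mono_left hAK).symm.sdiff_eq_left] at this
    omega
  obtain ⟨a, ha⟩ := Set.ncard_eq_one.mp hA1
  have hmem : ∀ v, deg G v = 2 * k ↔ v = a := fun v => by
    rw [← Set.mem_singleton_iff (a := v), ← ha, hA, Set.mem_ofPred_eq]
  exact ⟨a, (hmem a).2 rfl, fun v => (hmem v).1⟩

end IsSplitPartition

/-- Let `G` be a split graph on `4k + 1` vertices.  If `G` is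
self-complementary, then `G` has exactly one vertex `v` of degree `2k`, and the
induced subgraph `G - v` is also self-complementary. -/
theorem split_selfCompl_odd_order (k : ℕ) (G : SimpleGraph (Fin (4 * k + 1)))
    (hsplit : IsSplit G) (hsc : IsSelfCompl G) :
    (∃! v, deg G v = 2 * k) ∧
    ∀ v, deg G v = 2 * k → IsSelfCompl (G.induce {u | u ≠ v}) := by
  obtain ⟨K, I, hp⟩ := hsplit
  have hn : Nat.card (Fin (4 * k + 1)) = 4 * k + 1 := Nat.card_fin _
  have huniq : ∃! v, deg G v = 2 * k := by
    have hsum := hp.ncard_add_ncard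
    have hKI := hp.ncard_left_le_ncard_right_add_one hsc
    have hIK := hp.compl.ncard_left_le_ncard_right_add_one hsc.compl
    rcases (by omega : K.ncard = 2 * k + 1 ∨ I.ncard = 2 * k + 1) with hK | hI
    · exact hp.existsUnique_deg_eq hsc hn hK
    · have hdeg_compl : ∀ v, deg Gᶜ v = 2 * k ↔ deg G v = 2 * k := fun v => by
        have := deg_compl_add_deg G v
        omega
      simpa only [hdeg_compl] using hp.compl.existsUnique_deg_eq hsc.compl hn hI
  obtain ⟨σ⟩ := hsc
  refine ⟨huniq, fun v hv => IsSelfCompl.induce_of_bijOn σ ?_⟩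
  have hσv : σ v = v := huniq.unique (by have := deg_apply_add_deg σ v; omega) hv
  exact (Set.bijOn_singleton.2 hσv).compl σ.bijective
end

section
/- For every k >= 2, the degree sequence ((2k)^{4k+1}) is not forcibly self-complementary; that is, there exists a 2k-regular graph on 4k+1 vertices that is not self-complementary. -/
open SimpleGraph

/-!
The witness is the `k`-th power of the cycle `C_{4k+1}`, whose vertices are adjacent when their
circular distance is at most `k`. It is `2k`-regular and `{0, …, k}` is a clique in it. For an
independent set `S`, the translates `v + {0, …, k}` with `v ∈ S` are pairwise disjoint, so
`|S| (k + 1) ≤ 4k + 1` and the complement has no `K₄`. Hence for `k ≥ 3` the graph is not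
isomorphic to its complement. For `k = 2` both have clique number `3`; there a diamond (two
triangles sharing an edge) occurs in the graph but not in its complement, which is checked by
`decide`.
-/

open Finset

lemma ZMod.natCast_injOn_Iio (n : ℕ) : Set.InjOn (Nat.cast : ℕ → ZMod n) (Set.Iio n) :=
  fun a ha b hb h => by rw [← ZMod.val_natCast_of_lt ha, h, ZMod.val_natCast_of_lt hb]

namespace SimpleGraph

lemma deg_eq_degree {V : Type*} (G : SimpleGraph V) (v : V) [Fintype (G.neighborSet v)] :
    deg G v = G.degree v := by
  rw [deg, ← Nat.card_coe_set_eq, Nat.card_eq_fintype_card, card_neighborSet_eq_degree]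

def HasDiamond {V : Type*} (G : SimpleGraph V) : Prop :=
  ∃ a b c d : V, c ≠ d ∧ G.Adj a b ∧ G.Adj a c ∧ G.Adj b c ∧ G.Adj a d ∧ G.Adj b d

lemma HasDiamond.map {V W : Type*} {G : SimpleGraph V} {H : SimpleGraph W} (f : G ↪g H)
    (h : G.HasDiamond) : H.HasDiamond := by
  obtain ⟨a, b, c, d, hcd, hab, hac, hbc, had, hbd⟩ := h
  exact ⟨f a, f b, f c, f d, f.injective.ne hcd, f.map_adj_iff.2 hab, f.map_adj_iff.2 hac,
    f.map_adj_iff.2 hbc, f.map_adj_iff.2 had, f.map_adj_iff.2 hbd⟩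

/-- `x.val ≤ k` says `x ∈ {0, …, k}`; `circulantGraph` adds the negatives, so `u ~ v` iff the
circular distance of `u` and `v` is at most `k`. -/
def cyclePower (n k : ℕ) : SimpleGraph (ZMod n) :=
  circulantGraph {x | x.val ≤ k}

instance (n k : ℕ) : DecidableRel (cyclePower n k).Adj := by
  unfold cyclePower; infer_instance

variable {n k : ℕ}

lemma cyclePower_adj {v w : ZMod n} :
    (cyclePower n k).Adj v w ↔ v ≠ w ∧ ((v - w).val ≤ k ∨ (w - v).val ≤ k) :=
  Iff.of_eq (circulantGraph_adj _ v w)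

lemma neighborFinset_cyclePower [NeZero n] (hk : k < n) (v : ZMod n) :
    (cyclePower n k).neighborFinset v =
      (Icc 1 k).image (fun d : ℕ => v + d) ∪ (Icc 1 k).image (fun d : ℕ => v - d) := by
  ext w
  simp only [mem_neighborFinset, cyclePower_adj, mem_union, mem_image, mem_Icc]
  constructor
  · rintro ⟨hvw, h | h⟩
    · have hpos : (v - w).val ≠ 0 := (ZMod.val_ne_zero _).2 (sub_ne_zero.2 hvw)
      refine Or.inr ⟨(v - w).val, ⟨by omega, h⟩, ?_⟩
      rw [ZMod.natCast_zmod_val, sub_sub_cancel]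
    · have hpos : (w - v).val ≠ 0 := (ZMod.val_ne_zero _).2 (sub_ne_zero.2 hvw.symm)
      refine Or.inl ⟨(w - v).val, ⟨by omega, h⟩, ?_⟩
      rw [ZMod.natCast_zmod_val, add_sub_cancel]
  · rintro (⟨d, ⟨hd1, hdk⟩, rfl⟩ | ⟨d, ⟨hd1, hdk⟩, rfl⟩) <;>
    · have hval : (d : ZMod n).val = d := ZMod.val_natCast_of_lt (by omega)
      have hd0 : (d : ZMod n) ≠ 0 := fun h0 => by rw [h0, ZMod.val_zero] at hval; omega
      simp [hd0, hval, hdk, eq_sub_iff_add_eq]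

lemma degree_cyclePower [NeZero n] (h : 2 * k < n) (v : ZMod n) :
    (cyclePower n k).degree v = 2 * k := by
  have hinj := ZMod.natCast_injOn_Iio n
  rw [← card_neighborFinset_eq_degree, neighborFinset_cyclePower (by omega),
    card_union_of_disjoint, card_image_of_injOn, card_image_of_injOn, Nat.card_Icc]
  · omega
  · intro a ha b hb hab
    simp only [coe_Icc, Set.mem_Icc] at ha hb
    exact hinj (show a < n by omega) (show b < n by omega) (sub_right_injective hab)
  · intro a ha b hb hab
    simp only [coe_Icc, Set.mem_Icc] at ha hb
    exact hinj (show a < n by omega) (show b < n by omega) (add_right_injective v hab)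
  · simp only [Finset.disjoint_left, mem_image, mem_Icc, not_exists, not_and]
    rintro _ ⟨a, ⟨ha1, hak⟩, rfl⟩ b ⟨hb1, hbk⟩ hab
    have : ((a + b : ℕ) : ZMod n) = ((0 : ℕ) : ZMod n) := by push_cast; linear_combination -hab
    have := hinj (show a + b < n by omega) (show 0 < n by omega) this
    omega

lemma deg_cyclePower [NeZero n] (h : 2 * k < n) (v : ZMod n) :
    deg (cyclePower n k) v = 2 * k := by
  rw [deg_eq_degree, degree_cyclePower h]

lemma eq_or_cyclePower_adj_of_add_eq {v w : ZMod n} {a b : ℕ} (ha : a ≤ k) (hb : b ≤ k)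
    (h : v + a = w + b) : v = w ∨ (cyclePower n k).Adj v w := by
  wlog hab : a ≤ b generalizing v w a b
  · exact (this hb ha h.symm (by omega)).imp Eq.symm fun hwv => hwv.symm
  refine or_iff_not_imp_left.2 fun hvw => cyclePower_adj.2 ⟨hvw, Or.inl ?_⟩
  have hsub : v - w = ((b - a : ℕ) : ZMod n) := by
    rw [Nat.cast_sub hab]; linear_combination h
  rw [hsub, ZMod.val_natCast]
  exact (Nat.mod_le _ _).trans (by omega)

lemma isNClique_cyclePower (hk : k < n) :
    (cyclePower n k).IsNClique (k + 1) ((range (k + 1)).image Nat.cast) := by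
  refine ⟨?_, ?_⟩
  · simp only [coe_image, coe_range]
    rintro _ ⟨a, ha, rfl⟩ _ ⟨b, hb, rfl⟩ hab
    exact (eq_or_cyclePower_adj_of_add_eq (k := k) (v := (a : ZMod n)) (w := b)
      (Nat.lt_succ_iff.1 hb) (Nat.lt_succ_iff.1 ha) (add_comm _ _)).resolve_left hab
  · rw [card_image_of_injOn, card_range]
    exact (ZMod.natCast_injOn_Iio n).mono fun a ha => by simp at ha ⊢; omega

lemma not_cliqueFree_cyclePower (hk : k < n) : ¬ (cyclePower n k).CliqueFree (k + 1) :=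
  fun h => h _ (isNClique_cyclePower hk)

lemma card_mul_le_of_isIndepSet_cyclePower [NeZero n] {s : Finset (ZMod n)}
    (hs : (cyclePower n k).IsIndepSet s) (hk : k < n) : #s * (k + 1) ≤ n := by
  have hinj : Set.InjOn (fun p : ZMod n × ℕ => p.1 + p.2) ↑(s ×ˢ range (k + 1)) := by
    rintro ⟨v, a⟩ hva ⟨w, b⟩ hwb h
    simp only [coe_product, coe_range, Set.mem_prod, mem_coe, Set.mem_Iio] at hva hwb h
    obtain rfl : v = w := (eq_or_cyclePower_adj_of_add_eq (by omega) (by omega) h).resolve_right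
      fun hadj => hs hva.1 hwb.1 hadj.ne hadj
    rw [ZMod.natCast_injOn_Iio n (show a < n by omega) (show b < n by omega)
      (add_right_injective v h)]
  calc #s * (k + 1) = #(s ×ˢ range (k + 1)) := by rw [card_product, card_range]
    _ ≤ #(univ : Finset (ZMod n)) := card_le_card_of_injOn _ (fun _ _ => mem_univ _) hinj
    _ = n := by rw [card_univ, ZMod.card]

lemma cliqueFree_compl_cyclePower [NeZero n] {m : ℕ} (hk : k < n) (hm : n < m * (k + 1)) :
    (cyclePower n k)ᶜ.CliqueFree m := by
  intro s hs
  have := card_mul_le_of_isIndepSet_cyclePower ((isClique_compl _).1 hs.isClique) hk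
  rw [hs.card_eq] at this
  omega

lemma hasDiamond_cyclePower_nine_two : (cyclePower 9 2).HasDiamond :=
  ⟨0, 1, 2, 8, by decide⟩

lemma not_hasDiamond_compl_cyclePower_nine_two : ¬ (cyclePower 9 2)ᶜ.HasDiamond := by
  unfold HasDiamond; decide

end SimpleGraph

/-- For every `k ≥ 2`, the degree sequence `((2k)^{4k+1})` is not
forcibly self-complementary: there exists a `2k`-regular graph on `4k + 1` vertices
that is not self-complementary. -/
theorem regular_not_forcibly (k : ℕ) (hk : 2 ≤ k) :
    ∃ G : SimpleGraph (Fin (4 * k + 1)),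
      (∀ v, deg G v = 2 * k) ∧ ¬ IsSelfCompl G := by
  -- `ZMod (4 * k + 1)` unfolds to `Fin (4 * k + 1)`.
  refine ⟨cyclePower (4 * k + 1) k, fun v => deg_cyclePower (n := 4 * k + 1) (by omega) v, ?_⟩
  rintro ⟨e⟩
  obtain rfl | hk3 := hk.eq_or_lt
  · exact not_hasDiamond_compl_cyclePower_nine_two
      (hasDiamond_cyclePower_nine_two.map e.toEmbedding)
  · have hfree := (cliqueFree_compl_cyclePower (m := 4) (by omega) (by omega)).comap e.isContained
    exact not_cliqueFree_cyclePower (by omega) (hfree.mono (by omega))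
end
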